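/- Let P, Q : ℝ³ → ℝ be smooth functions of the variables (x, y, t) satisfying the system P_{xt} = P_{xy}·(e^{P_x} + e^{Q_x}) + 2·Q_{xy}·e^{Q_x} + Q_{xx}·e^{Q_x}·(P_y + Q_y) and Q_{xt} = Q_{xy}·(e^{Q_x} + e^{P_x}) + 2·P_{xy}·e^{P_x} + P_{xx}·e^{P_x}·(P_y + Q_y). Then the conservation law ∂_t (e^{3P_x} + 9·e^{2P_x + Q_x} + 9·e^{P_x + 2Q_x} + e^{3Q_x}) = ∂_x ((3·e^{3P_x + Q_x} + 9·e^{2P_x + 2Q_x} + 3·e^{P_x + 3Q_x})·(P_y + Q_y)) + ∂_y ((3/4)·e^{4P_x} + 12·e^{3P_x + Q_x} + 27·e^{2P_x + 2Q_x} + 12·e^{P_x + 3Q_x} + (3/4)·e^{4Q_x}) holds identically. -/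

import Mathlib

open Real Finset

/-- Partial derivative in the first variable `x`. -/
noncomputable def dX (P : ℝ → ℝ → ℝ → ℝ) (x y t : ℝ) : ℝ :=
  deriv (fun s => P s y t) x

/-- Partial derivative in the second variable `y`. -/
noncomputable def dY (P : ℝ → ℝ → ℝ → ℝ) (x y t : ℝ) : ℝ :=
  deriv (fun s => P x s t) y

noncomputable def D1 (g : ℝ × ℝ × ℝ → ℝ) (p : ℝ × ℝ × ℝ) : ℝ := fderiv ℝ g p (1, 0, 0)
noncomputable def D2 (g : ℝ × ℝ × ℝ → ℝ) (p : ℝ × ℝ × ℝ) : ℝ := fderiv ℝ g p (0, 1, 0)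
noncomputable def D3 (g : ℝ × ℝ × ℝ → ℝ) (p : ℝ × ℝ × ℝ) : ℝ := fderiv ℝ g p (0, 0, 1)

lemma slice1 (g : ℝ × ℝ × ℝ → ℝ) (hg : Differentiable ℝ g) (x y t : ℝ) :
    HasDerivAt (fun s => g (s, y, t)) (D1 g (x, y, t)) x := by
  have hl : HasDerivAt (fun s : ℝ => (s, y, t)) ((1:ℝ), (0:ℝ), (0:ℝ)) x :=
    HasDerivAt.prodMk (hasDerivAt_id x) (HasDerivAt.prodMk (hasDerivAt_const x y) (hasDerivAt_const x t))
  exact (hg (x, y, t)).hasFDerivAt.comp_hasDerivAt x hl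

lemma slice2 (g : ℝ × ℝ × ℝ → ℝ) (hg : Differentiable ℝ g) (x y t : ℝ) :
    HasDerivAt (fun s => g (x, s, t)) (D2 g (x, y, t)) y := by
  have hl : HasDerivAt (fun s : ℝ => (x, s, t)) ((0:ℝ), (1:ℝ), (0:ℝ)) y :=
    HasDerivAt.prodMk (hasDerivAt_const y x) (HasDerivAt.prodMk (hasDerivAt_id y) (hasDerivAt_const y t))
  exact (hg (x, y, t)).hasFDerivAt.comp_hasDerivAt y hl

lemma slice3 (g : ℝ × ℝ × ℝ → ℝ) (hg : Differentiable ℝ g) (x y t : ℝ) :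
    HasDerivAt (fun s => g (x, y, s)) (D3 g (x, y, t)) t := by
  have hl : HasDerivAt (fun s : ℝ => (x, y, s)) ((0:ℝ), (0:ℝ), (1:ℝ)) t :=
    HasDerivAt.prodMk (hasDerivAt_const t x) (HasDerivAt.prodMk (hasDerivAt_const t y) (hasDerivAt_id t))
  exact (hg (x, y, t)).hasFDerivAt.comp_hasDerivAt t hl

lemma contDiff_D1 {g : ℝ × ℝ × ℝ → ℝ} (hg : ContDiff ℝ (⊤ : ℕ∞) g) : ContDiff ℝ (⊤ : ℕ∞) (D1 g) :=
  (hg.fderiv_right (by simp)).clm_apply contDiff_const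

lemma contDiff_D2 {g : ℝ × ℝ × ℝ → ℝ} (hg : ContDiff ℝ (⊤ : ℕ∞) g) : ContDiff ℝ (⊤ : ℕ∞) (D2 g) :=
  (hg.fderiv_right (by simp)).clm_apply contDiff_const

lemma symmD {g : ℝ × ℝ × ℝ → ℝ} (hg : ContDiff ℝ (⊤ : ℕ∞) g) (p : ℝ × ℝ × ℝ) :
    D1 (D2 g) p = D2 (D1 g) p := by
  have hd : DifferentiableAt ℝ (fderiv ℝ g) p :=
    ((hg.fderiv_right (m := (⊤ : ℕ∞)) (by simp)).differentiable (by simp)) p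
  have hsymm : IsSymmSndFDerivAt ℝ g p :=
    hg.contDiffAt.isSymmSndFDerivAt (by rw [minSmoothness_of_isRCLikeNormedField]; exact WithTop.coe_le_coe.mpr (le_top : (2 : ℕ∞) ≤ ⊤))
  unfold D1 D2
  rw [fderiv_clm_apply hd (differentiableAt_const _), fderiv_clm_apply hd (differentiableAt_const _)]
  simp [hsymm.eq]
lemma exp_expand2 (a : ℝ) : Real.exp (2 * a) = Real.exp a ^ 2 := by
  rw [show (2:ℝ) * a = a + a by ring, Real.exp_add]; ring

lemma exp_expand3 (a : ℝ) : Real.exp (3 * a) = Real.exp a ^ 3 := by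
  rw [show (3:ℝ) * a = a + a + a by ring, Real.exp_add, Real.exp_add]; ring

lemma exp_expand4 (a : ℝ) : Real.exp (4 * a) = Real.exp a ^ 4 := by
  rw [show (4:ℝ) * a = a + a + a + a by ring, Real.exp_add, Real.exp_add, Real.exp_add]; ring

theorem toda_third_conservation_law
    (P Q : ℝ → ℝ → ℝ → ℝ)
    (hPsmooth : ContDiff ℝ (⊤ : ℕ∞) (fun p : ℝ × ℝ × ℝ => P p.1 p.2.1 p.2.2))
    (hQsmooth : ContDiff ℝ (⊤ : ℕ∞) (fun p : ℝ × ℝ × ℝ => Q p.1 p.2.1 p.2.2))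
    (hP : ∀ x y t : ℝ,
      deriv (fun s => dX P x y s) t =
        deriv (fun s => dX P x s t) y * (Real.exp (dX P x y t) + Real.exp (dX Q x y t))
        + 2 * deriv (fun s => dX Q x s t) y * Real.exp (dX Q x y t)
        + deriv (fun s => dX Q s y t) x * Real.exp (dX Q x y t) * (dY P x y t + dY Q x y t))
    (hQ : ∀ x y t : ℝ,
      deriv (fun s => dX Q x y s) t =
        deriv (fun s => dX Q x s t) y * (Real.exp (dX Q x y t) + Real.exp (dX P x y t))
        + 2 * deriv (fun s => dX P x s t) y * Real.exp (dX P x y t)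
        + deriv (fun s => dX P s y t) x * Real.exp (dX P x y t) * (dY P x y t + dY Q x y t))
    (x y t : ℝ) :
    deriv (fun s => Real.exp (3 * dX P x y s) + 9 * Real.exp (2 * dX P x y s + dX Q x y s) + 9 * Real.exp (dX P x y s + 2 * dX Q x y s) + Real.exp (3 * dX Q x y s)) t =
      deriv (fun s => (3 * Real.exp (3 * dX P s y t + dX Q s y t) + 9 * Real.exp (2 * dX P s y t + 2 * dX Q s y t) + 3 * Real.exp (dX P s y t + 3 * dX Q s y t)) * (dY P s y t + dY Q s y t)) x
      + deriv (fun s => (3 / 4) * Real.exp (4 * dX P x s t) + 12 * Real.exp (3 * dX P x s t + dX Q x s t) + 27 * Real.exp (2 * dX P x s t + 2 * dX Q x s t) + 12 * Real.exp (dX P x s t + 3 * dX Q x s t) + (3 / 4) * Real.exp (4 * dX Q x s t)) y := by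
  set f : ℝ × ℝ × ℝ → ℝ := fun p => P p.1 p.2.1 p.2.2 with hfdef
  set g : ℝ × ℝ × ℝ → ℝ := fun p => Q p.1 p.2.1 p.2.2 with hgdef
  have hfd : Differentiable ℝ f := hPsmooth.differentiable (by simp)
  have hgd : Differentiable ℝ g := hQsmooth.differentiable (by simp)
  have hD1f : Differentiable ℝ (D1 f) := (contDiff_D1 hPsmooth).differentiable (by simp)
  have hD2f : Differentiable ℝ (D2 f) := (contDiff_D2 hPsmooth).differentiable (by simp)
  have hD1g : Differentiable ℝ (D1 g) := (contDiff_D1 hQsmooth).differentiable (by simp)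
  have hD2g : Differentiable ℝ (D2 g) := (contDiff_D2 hQsmooth).differentiable (by simp)
  have hdXP : ∀ a b c : ℝ, dX P a b c = D1 f (a, b, c) := fun a b c => (slice1 f hfd a b c).deriv
  have hdYP : ∀ a b c : ℝ, dY P a b c = D2 f (a, b, c) := fun a b c => (slice2 f hfd a b c).deriv
  have hdXQ : ∀ a b c : ℝ, dX Q a b c = D1 g (a, b, c) := fun a b c => (slice1 g hgd a b c).deriv
  have hdYQ : ∀ a b c : ℝ, dY Q a b c = D2 g (a, b, c) := fun a b c => (slice2 g hgd a b c).deriv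
  have hA1 : HasDerivAt (fun s => D1 f (s, y, t)) (D1 (D1 f) (x, y, t)) x := slice1 (D1 f) hD1f x y t
  have hA2 : HasDerivAt (fun s => D1 f (x, s, t)) (D2 (D1 f) (x, y, t)) y := slice2 (D1 f) hD1f x y t
  have hA3 : HasDerivAt (fun s => D1 f (x, y, s)) (D3 (D1 f) (x, y, t)) t := slice3 (D1 f) hD1f x y t
  have hB1 : HasDerivAt (fun s => D1 g (s, y, t)) (D1 (D1 g) (x, y, t)) x := slice1 (D1 g) hD1g x y t
  have hB2 : HasDerivAt (fun s => D1 g (x, s, t)) (D2 (D1 g) (x, y, t)) y := slice2 (D1 g) hD1g x y t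
  have hB3 : HasDerivAt (fun s => D1 g (x, y, s)) (D3 (D1 g) (x, y, t)) t := slice3 (D1 g) hD1g x y t
  have hA2x : HasDerivAt (fun s => D2 f (s, y, t)) (D2 (D1 f) (x, y, t)) x := by
    have h := slice1 (D2 f) hD2f x y t
    rwa [symmD hPsmooth] at h
  have hB2x : HasDerivAt (fun s => D2 g (s, y, t)) (D2 (D1 g) (x, y, t)) x := by
    have h := slice1 (D2 g) hD2g x y t
    rwa [symmD hQsmooth] at h
  have hP' := hP x y t
  have hQ' := hQ x y t
  simp only [hdXP, hdXQ, hdYP, hdYQ] at hP' hQ' ⊢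
  rw [hA3.deriv, hA2.deriv, hB2.deriv, hB1.deriv] at hP'
  rw [hB3.deriv, hB2.deriv, hA2.deriv, hA1.deriv] at hQ'
  have hL : HasDerivAt
      (fun s => Real.exp (3 * D1 f (x, y, s)) + 9 * Real.exp (2 * D1 f (x, y, s) + D1 g (x, y, s)) + 9 * Real.exp (D1 f (x, y, s) + 2 * D1 g (x, y, s)) + Real.exp (3 * D1 g (x, y, s)))
      (Real.exp (3 * D1 f (x, y, t)) * (3 * D3 (D1 f) (x, y, t))
        + 9 * (Real.exp (2 * D1 f (x, y, t) + D1 g (x, y, t)) * (2 * D3 (D1 f) (x, y, t) + D3 (D1 g) (x, y, t)))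
        + 9 * (Real.exp (D1 f (x, y, t) + 2 * D1 g (x, y, t)) * (D3 (D1 f) (x, y, t) + 2 * D3 (D1 g) (x, y, t)))
        + Real.exp (3 * D1 g (x, y, t)) * (3 * D3 (D1 g) (x, y, t))) t :=
    (((hA3.const_mul 3).exp.add ((((hA3.const_mul 2).add hB3).exp).const_mul 9)).add
      (((hA3.add (hB3.const_mul 2)).exp).const_mul 9)).add (hB3.const_mul 3).exp
  have hX : HasDerivAt
      (fun s => (3 * Real.exp (3 * D1 f (s, y, t) + D1 g (s, y, t)) + 9 * Real.exp (2 * D1 f (s, y, t) + 2 * D1 g (s, y, t)) + 3 * Real.exp (D1 f (s, y, t) + 3 * D1 g (s, y, t))) * (D2 f (s, y, t) + D2 g (s, y, t)))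
      ((3 * (Real.exp (3 * D1 f (x, y, t) + D1 g (x, y, t)) * (3 * D1 (D1 f) (x, y, t) + D1 (D1 g) (x, y, t)))
          + 9 * (Real.exp (2 * D1 f (x, y, t) + 2 * D1 g (x, y, t)) * (2 * D1 (D1 f) (x, y, t) + 2 * D1 (D1 g) (x, y, t)))
          + 3 * (Real.exp (D1 f (x, y, t) + 3 * D1 g (x, y, t)) * (D1 (D1 f) (x, y, t) + 3 * D1 (D1 g) (x, y, t)))) * (D2 f (x, y, t) + D2 g (x, y, t))
        + (3 * Real.exp (3 * D1 f (x, y, t) + D1 g (x, y, t)) + 9 * Real.exp (2 * D1 f (x, y, t) + 2 * D1 g (x, y, t)) + 3 * Real.exp (D1 f (x, y, t) + 3 * D1 g (x, y, t))) * (D2 (D1 f) (x, y, t) + D2 (D1 g) (x, y, t))) x :=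
    (((((hA1.const_mul 3).add hB1).exp.const_mul 3).add
        ((((hA1.const_mul 2).add (hB1.const_mul 2)).exp).const_mul 9)).add
      (((hA1.add (hB1.const_mul 3)).exp).const_mul 3)).mul (hA2x.add hB2x)
  have hY : HasDerivAt
      (fun s => 3 / 4 * Real.exp (4 * D1 f (x, s, t)) + 12 * Real.exp (3 * D1 f (x, s, t) + D1 g (x, s, t)) + 27 * Real.exp (2 * D1 f (x, s, t) + 2 * D1 g (x, s, t)) + 12 * Real.exp (D1 f (x, s, t) + 3 * D1 g (x, s, t)) + 3 / 4 * Real.exp (4 * D1 g (x, s, t)))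
      (3 / 4 * (Real.exp (4 * D1 f (x, y, t)) * (4 * D2 (D1 f) (x, y, t)))
        + 12 * (Real.exp (3 * D1 f (x, y, t) + D1 g (x, y, t)) * (3 * D2 (D1 f) (x, y, t) + D2 (D1 g) (x, y, t)))
        + 27 * (Real.exp (2 * D1 f (x, y, t) + 2 * D1 g (x, y, t)) * (2 * D2 (D1 f) (x, y, t) + 2 * D2 (D1 g) (x, y, t)))
        + 12 * (Real.exp (D1 f (x, y, t) + 3 * D1 g (x, y, t)) * (D2 (D1 f) (x, y, t) + 3 * D2 (D1 g) (x, y, t)))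
        + 3 / 4 * (Real.exp (4 * D1 g (x, y, t)) * (4 * D2 (D1 g) (x, y, t)))) y :=
    (((((hA2.const_mul 4).exp.const_mul (3/4)).add
          ((((hA2.const_mul 3).add hB2).exp).const_mul 12)).add
        ((((hA2.const_mul 2).add (hB2.const_mul 2)).exp).const_mul 27)).add
      (((hA2.add (hB2.const_mul 3)).exp).const_mul 12)).add ((hB2.const_mul 4).exp.const_mul (3/4))
  rw [hL.deriv, hX.deriv, hY.deriv, hP', hQ']
  simp only [Real.exp_add, exp_expand2, exp_expand3, exp_expand4]
  ring
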